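/- arXiv:2105.06561 — 2 statements merged into one kernel-verified Lean document; each statement's English description precedes it below -/
import Mathlib

section
/- For a Schelling game on a path with vertices w_1,…,w_n, |T1| ≥ 4 and |T2| ≥ 2, the assignment in which agents of T1 occupy w_1 and w_2, agents of T2 occupy w_3 through w_{|T2|+2}, and the remaining agents of T1 occupy the rest, is a swap-equilibrium; furthermore, deleting the single edge {w_1, w_2} makes this assignment unstable, so it has edge-robustness zero. -/
/-!
On a graph of maximum degree two, an agent with a neighbour of its own type has utility at least
`1/2`, and an agent with a neighbour of the other type at most `1/2`. So if every agent has a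
neighbour of its own type, no swap is profitable: the agent moving from `j` to `i` finds there the
like-typed neighbour of the agent on `i`, which is of the other type, and cannot gain. In the path
assignment every maximal monochromatic block has at least two vertices (this is where `|T1| ≥ 4`
and `|T2| ≥ 2` enter), hence the equilibrium. Once `{w_1, w_2}` is deleted, the `T1` agent on `w_2`
has only a `T2` neighbour, utility `0`; swapping it with the `T2` agent on `w_{|T2|+2}` (utility
`1/2`) gives the two agents utilities `1/2` and `1`.
-/

open SimpleGraph

variable {V : Type*}

/-- Utility of the agent occupying vertex `v` in graph `H` under type assignment `τ`:
the fraction of same-type agents among occupied neighbors (0 if no neighbors). -/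
noncomputable def utility (H : SimpleGraph V) (τ : V → Bool) (v : V) : ℚ := by
  classical
  exact if H.neighborSet v = ∅ then 0
    else ((H.neighborSet v ∩ {w | τ w = τ v}).ncard : ℚ) / ((H.neighborSet v).ncard : ℚ)

/-- The type function after the agents on vertices `i` and `j` exchange their vertices. -/
noncomputable def swapAt (τ : V → Bool) (i j : V) : V → Bool := fun v => by
  classical
  exact if v = i then τ j else if v = j then τ i else τ v

/-- The swap of the (distinct-type) agents on `i` and `j` strictly increases both utilities. -/
def ProfitableSwap (H : SimpleGraph V) (τ : V → Bool) (i j : V) : Prop :=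
  τ i ≠ τ j ∧
  utility H τ i < utility H (swapAt τ i j) j ∧
  utility H τ j < utility H (swapAt τ i j) i

/-- Swap-equilibrium: no profitable swap exists. -/
def IsSwapEq (H : SimpleGraph V) (τ : V → Bool) : Prop :=
  ∀ i j : V, ¬ ProfitableSwap H τ i j

/-- The path graph on `Fin n` (vertices `0,…,n-1` with consecutive vertices adjacent). -/
def pathG (n : ℕ) : SimpleGraph (Fin n) where
  Adj u v := u.val + 1 = v.val ∨ v.val + 1 = u.val
  symm := ⟨fun u v h => h.symm⟩
  loopless := ⟨by intro u h; rcases h with h | h <;> omega⟩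

section Utility

variable {H : SimpleGraph V} {σ : V → Bool} {v a : V}

lemma utility_eq_zero_of_forall_ne (h : ∀ w ∈ H.neighborSet v, σ w ≠ σ v) :
    utility H σ v = 0 := by
  have hsame : H.neighborSet v ∩ {w | σ w = σ v} = ∅ :=
    Set.eq_empty_of_forall_notMem fun w hw => h w hw.1 hw.2
  unfold utility
  split_ifs <;> simp [hsame]

lemma utility_eq_one_of_forall_eq (hfin : (H.neighborSet v).Finite) (ha : a ∈ H.neighborSet v)
    (h : ∀ w ∈ H.neighborSet v, σ w = σ v) : utility H σ v = 1 := by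
  have hsame : H.neighborSet v ∩ {w | σ w = σ v} = H.neighborSet v :=
    Set.inter_eq_left.mpr h
  have hpos : 0 < (H.neighborSet v).ncard := (Set.ncard_pos hfin).mpr ⟨a, ha⟩
  unfold utility
  rw [if_neg (Set.nonempty_of_mem ha).ne_empty, hsame]
  exact div_self (by exact_mod_cast hpos.ne')

lemma utility_le_half (hfin : (H.neighborSet v).Finite) (hdeg : (H.neighborSet v).ncard ≤ 2)
    (ha : a ∈ H.neighborSet v) (hσa : σ a ≠ σ v) : utility H σ v ≤ 1 / 2 := by
  have hlt : (H.neighborSet v ∩ {w | σ w = σ v}).ncard < (H.neighborSet v).ncard :=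
    Set.ncard_lt_ncard (Set.ssubset_iff_of_subset Set.inter_subset_left |>.mpr
      ⟨a, ha, fun h => hσa h.2⟩) hfin
  unfold utility
  split_ifs
  · norm_num
  · rw [div_le_div_iff₀ (Nat.cast_pos.mpr (by omega)) two_pos]
    exact_mod_cast (by omega : _ * 2 ≤ 1 * _)

lemma half_le_utility (hfin : (H.neighborSet v).Finite) (hdeg : (H.neighborSet v).ncard ≤ 2)
    (ha : a ∈ H.neighborSet v) (hσa : σ a = σ v) : 1 / 2 ≤ utility H σ v := by
  have hsame : 0 < (H.neighborSet v ∩ {w | σ w = σ v}).ncard :=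
    (Set.ncard_pos (hfin.subset Set.inter_subset_left)).mpr ⟨a, ha, hσa⟩
  have hpos : 0 < (H.neighborSet v).ncard := (Set.ncard_pos hfin).mpr ⟨a, ha⟩
  unfold utility
  rw [if_neg (Set.nonempty_of_mem ha).ne_empty, div_le_div_iff₀ two_pos (Nat.cast_pos.mpr hpos)]
  exact_mod_cast (by omega : 1 * _ ≤ _ * 2)

end Utility

section Swap

variable {τ : V → Bool} {i j v : V}

lemma swapAt_apply_left : swapAt τ i j i = τ j := by simp [swapAt]

lemma swapAt_apply_right : swapAt τ i j j = τ i := by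
  by_cases h : j = i <;> simp [swapAt, h]

lemma swapAt_apply_of_ne (hi : v ≠ i) (hj : v ≠ j) : swapAt τ i j v = τ v := by
  simp [swapAt, hi, hj]

end Swap

theorem isSwapEq_of_forall_exists_adj_eq {H : SimpleGraph V} {τ : V → Bool}
    (hfin : ∀ v, (H.neighborSet v).Finite) (hdeg : ∀ v, (H.neighborSet v).ncard ≤ 2)
    (hsame : ∀ v, ∃ w, H.Adj v w ∧ τ w = τ v) : IsSwapEq H τ := by
  rintro i j ⟨hij, -, hgain⟩
  obtain ⟨k, hik, hk⟩ := hsame i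
  obtain ⟨l, hjl, hl⟩ := hsame j
  have hkj : k ≠ j := by
    rintro rfl
    exact hij hk.symm
  have hafter : utility H (swapAt τ i j) i ≤ 1 / 2 :=
    utility_le_half (hfin i) (hdeg i) hik
      (by rw [swapAt_apply_of_ne hik.ne' hkj, swapAt_apply_left, hk]; exact hij)
  have hbefore : 1 / 2 ≤ utility H τ j := half_le_utility (hfin j) (hdeg j) hjl hl
  exact (hgain.trans_le hafter).not_ge hbefore

lemma ncard_neighborSet_le_two_of_le_pathG {n : ℕ} {H : SimpleGraph (Fin n)} (hH : H ≤ pathG n)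
    (v : Fin n) : (H.neighborSet v).ncard ≤ 2 :=
  calc (H.neighborSet v).ncard = (Fin.val '' H.neighborSet v).ncard :=
        (Set.ncard_image_of_injective _ Fin.val_injective).symm
    _ ≤ ({v.val - 1, v.val + 1} : Set ℕ).ncard := by
        refine Set.ncard_le_ncard ?_
        rintro _ ⟨w, hw, rfl⟩
        have hadj := hH hw
        simp only [pathG] at hadj
        simp only [Set.mem_insert_iff, Set.mem_singleton_iff]
        omega
    _ ≤ 2 := (Set.ncard_insert_le _ _).trans (by simp)

section Blocks

variable {n t2 : ℕ} {τ : Fin n → Bool}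

lemma exists_pathG_adj_eq_of_blocks (ht2 : 2 ≤ t2) (hn : t2 + 4 ≤ n)
    (hτ : ∀ v : Fin n, τ v = decide (v.val < 2 ∨ t2 + 2 ≤ v.val)) (v : Fin n) :
    ∃ w, (pathG n).Adj v w ∧ τ w = τ v := by
  obtain ⟨w, hwn, hadj, htype⟩ : ∃ w < n, (v.val + 1 = w ∨ w + 1 = v.val) ∧
      (w < 2 ∨ t2 + 2 ≤ w ↔ v.val < 2 ∨ t2 + 2 ≤ v.val) := by
    refine ⟨if v.val = 0 ∨ v.val = 2 ∨ (t2 + 2 ≤ v.val ∧ v.val + 1 < n) then v.val + 1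
      else v.val - 1, ?_⟩
    have := v.isLt
    split_ifs <;> omega
  exact ⟨⟨w, hwn⟩, hadj, by rw [hτ, hτ, decide_eq_decide]; exact htype⟩

lemma profitableSwap_deleteEdges_pathG_of_blocks (ht2 : 2 ≤ t2) (hn : t2 + 3 ≤ n)
    (hτ : ∀ v : Fin n, τ v = decide (v.val < 2 ∨ t2 + 2 ≤ v.val)) :
    ProfitableSwap ((pathG n).deleteEdges
        {s((⟨0, by omega⟩ : Fin n), (⟨1, by omega⟩ : Fin n))}) τ
      ⟨1, by omega⟩ ⟨t2 + 1, by omega⟩ := by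
  set G := (pathG n).deleteEdges {s((⟨0, by omega⟩ : Fin n), (⟨1, by omega⟩ : Fin n))}
  have hG : ∀ u v : Fin n, G.Adj u v ↔
      (u.val + 1 = v.val ∨ v.val + 1 = u.val) ∧ u.val + v.val ≠ 1 := by
    intro u v
    simp only [G, deleteEdges_adj, pathG, Set.mem_singleton_iff, Sym2.eq_iff, Fin.ext_iff]
    omega
  have hfin : ∀ v, (G.neighborSet v).Finite := fun _ => Set.toFinite _
  have hdeg : ∀ v, (G.neighborSet v).ncard ≤ 2 :=
    ncard_neighborSet_le_two_of_le_pathG (deleteEdges_le _)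
  have hτ1 : τ ⟨1, by omega⟩ = true := by rw [hτ]; exact decide_eq_true (by dsimp only; omega)
  have hτ2 : τ ⟨2, by omega⟩ = false := by rw [hτ]; exact decide_eq_false (by dsimp only; omega)
  have hτj : τ ⟨t2 + 1, by omega⟩ = false := by
    rw [hτ]; exact decide_eq_false (by dsimp only; omega)
  have hτk : τ ⟨t2 + 2, by omega⟩ = true := by
    rw [hτ]; exact decide_eq_true (by dsimp only; omega)
  have hadj1 : ∀ w, G.Adj ⟨1, by omega⟩ w ↔ w = ⟨2, by omega⟩ := by
    intro w
    rw [hG, Fin.ext_iff]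
    dsimp only
    omega
  have hadjk : G.Adj ⟨t2 + 1, by omega⟩ ⟨t2 + 2, by omega⟩ :=
    (hG _ _).mpr ⟨Or.inl rfl, by dsimp only; omega⟩
  refine ⟨by rw [hτ1, hτj]; decide, ?_, ?_⟩
  · calc utility G τ ⟨1, _⟩ = 0 :=
          utility_eq_zero_of_forall_ne fun w hw => by rw [(hadj1 w).mp hw, hτ2, hτ1]; decide
      _ < 1 / 2 := by norm_num
      _ ≤ _ := half_le_utility (hfin _) (hdeg _) hadjk <| by
          rw [swapAt_apply_of_ne (by rw [Ne, Fin.mk.injEq]; omega)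
            (by rw [Ne, Fin.mk.injEq]; omega), swapAt_apply_right, hτk, hτ1]
  · calc utility G τ ⟨t2 + 1, _⟩ ≤ 1 / 2 :=
          utility_le_half (hfin _) (hdeg _) hadjk (by rw [hτk, hτj]; decide)
      _ < 1 := by norm_num
      _ = _ := Eq.symm <| utility_eq_one_of_forall_eq (hfin _) ((hadj1 _).mpr rfl) fun w hw => by
          rw [(hadj1 w).mp hw, swapAt_apply_of_ne (by rw [Ne, Fin.mk.injEq]; omega)
            (by rw [Ne, Fin.mk.injEq]; omega), swapAt_apply_left, hτ2, hτj]

end Blocks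

/-- On a path `w_1,…,w_n` with `|T1| ≥ 4`, `|T2| ≥ 2`, the assignment with `T1` on
`w_1, w_2`, `T2` on `w_3,…,w_{|T2|+2}`, and `T1` on the rest is a swap-equilibrium, and
deleting the single edge `{w_1, w_2}` makes it unstable (edge-robustness zero). -/
theorem path_equilibrium_edge_robustness_zero (n t1 t2 : ℕ)
    (hn : n = t1 + t2) (h1 : 4 ≤ t1) (h2 : 2 ≤ t2)
    (τ : Fin n → Bool)
    (hτ : ∀ v : Fin n, τ v = decide (v.val < 2 ∨ t2 + 2 ≤ v.val)) :
    IsSwapEq (pathG n) τ ∧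
    ¬ IsSwapEq ((pathG n).deleteEdges
        {s((⟨0, by omega⟩ : Fin n), (⟨1, by omega⟩ : Fin n))}) τ := by
  have hlen : t2 + 4 ≤ n := by omega
  refine ⟨?_, fun hEq => hEq _ _ (profitableSwap_deleteEdges_pathG_of_blocks h2 (by omega) hτ)⟩
  exact isSwapEq_of_forall_exists_adj_eq (fun _ => Set.toFinite _)
    (ncard_neighborSet_le_two_of_le_pathG le_rfl) (exists_pathG_adj_eq_of_blocks h2 hlen hτ)
end

section
/- Let G be an α-star-constellation graph for some α ∈ ℕ₀ and let v be an assignment in a Schelling game on G satisfying: every degree-one vertex of G is occupied by an agent of the same type as the agent on its unique neighbor. Then v is a swap-equilibrium. -/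
open SimpleGraph

variable {V : Type*}

/-- Degree of a vertex (number of neighbors). -/
noncomputable def ndeg (H : SimpleGraph V) (v : V) : ℕ := (H.neighborSet v).ncard

/-- `G` is an `α`-star-constellation graph: connected, and every vertex of degree `> 1`
has at least `α` more degree-one neighbors than neighbors of degree `> 1`. -/
def IsStarConstellation (G : SimpleGraph V) (α : ℕ) : Prop :=
  G.Connected ∧ ∀ v : V, 1 < ndeg G v →
    {w ∈ G.neighborSet v | 1 < ndeg G w}.ncard + α ≤
      {w ∈ G.neighborSet v | ndeg G w = 1}.ncard

/-!
A vertex of degree `> 1` has at least as many leaf neighbours as non-leaf ones. When every leaf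
matches its neighbour, the agent there thus has utility `≥ 1/2`, while an agent of the other type
moving there finds all those leaves of the wrong type and gets utility `≤ 1/2`; so in a swap
between two such vertices neither agent gains. An agent on a leaf already has
utility `1`, and an agent moving onto an isolated vertex gets utility `0`.
-/

def sameTypeNeighbors (G : SimpleGraph V) (τ : V → Bool) (v : V) : Set V :=
  G.neighborSet v ∩ {w | τ w = τ v}

def leafNeighbors (G : SimpleGraph V) (v : V) : Set V := {w ∈ G.neighborSet v | ndeg G w = 1}

lemma swapAt_right (τ : V → Bool) {i j : V} (h : i ≠ j) : swapAt τ i j j = τ i := by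
  simp [swapAt, h.symm]

lemma swapAt_of_ne (τ : V → Bool) {i j w : V} (hi : w ≠ i) (hj : w ≠ j) :
    swapAt τ i j w = τ w := by
  simp [swapAt, hi, hj]

section

variable {G : SimpleGraph V} {τ : V → Bool} {v : V}

/-- Also true for an empty neighbourhood, since then `ndeg G v = 0` and division by `0` gives `0`. -/
lemma utility_eq_div (G : SimpleGraph V) (τ : V → Bool) (v : V) :
    utility G τ v = ((sameTypeNeighbors G τ v).ncard : ℚ) / ndeg G v := by
  rw [utility]
  split_ifs with h
  · simp [ndeg, h]
  · rfl

lemma utility_nonneg (G : SimpleGraph V) (τ : V → Bool) (v : V) : 0 ≤ utility G τ v := by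
  rw [utility_eq_div]
  positivity

lemma utility_of_ndeg_eq_zero (τ : V → Bool) (hv : ndeg G v = 0) : utility G τ v = 0 := by
  rw [utility_eq_div, hv, Nat.cast_zero, div_zero]

lemma utility_of_ndeg_eq_one (hv : ndeg G v = 1) (h : ∀ w, G.Adj v w → τ w = τ v) :
    utility G τ v = 1 := by
  have : sameTypeNeighbors G τ v = G.neighborSet v := Set.inter_eq_left.2 h
  rw [utility_eq_div, this, ← ndeg, hv, Nat.cast_one, div_one]

lemma half_le_utility_of_le (hv : 0 < ndeg G v)
    (h : ndeg G v ≤ 2 * (sameTypeNeighbors G τ v).ncard) : 1 / 2 ≤ utility G τ v := by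
  rw [utility_eq_div, le_div_iff₀ (mod_cast hv)]
  have : (ndeg G v : ℚ) ≤ 2 * (sameTypeNeighbors G τ v).ncard := mod_cast h
  linarith

lemma utility_le_half_of_le (h : 2 * (sameTypeNeighbors G τ v).ncard ≤ ndeg G v) :
    utility G τ v ≤ 1 / 2 := by
  rw [utility_eq_div]
  refine div_le_of_le_mul₀ (by positivity) (by norm_num) ?_
  have : 2 * ((sameTypeNeighbors G τ v).ncard : ℚ) ≤ ndeg G v := mod_cast h
  linarith

variable [Finite V]

lemma utility_le_one (G : SimpleGraph V) (τ : V → Bool) (v : V) : utility G τ v ≤ 1 := by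
  rw [utility_eq_div]
  exact div_le_one_of_le₀ (mod_cast Set.ncard_le_ncard Set.inter_subset_left) (by positivity)

lemma ndeg_pos_of_adj {w : V} (h : G.Adj v w) : 0 < ndeg G w :=
  (Set.ncard_pos (Set.toFinite _)).2 ⟨v, h.symm⟩

lemma ndeg_le_card_leafNeighbors_add (v : V) :
    ndeg G v ≤ (leafNeighbors G v).ncard + {w ∈ G.neighborSet v | 1 < ndeg G w}.ncard := by
  rw [ndeg, ← Set.ncard_inter_add_ncard_sdiff_eq_ncard _ {w | ndeg G w = 1}]
  refine add_le_add le_rfl (Set.ncard_le_ncard fun w ⟨hw, hw1⟩ => ⟨hw, ?_⟩)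
  have := ndeg_pos_of_adj hw
  simp only [Set.mem_ofPred_eq] at hw1
  omega

variable {α : ℕ}

lemma IsStarConstellation.ndeg_le_two_mul_card_leafNeighbors (hG : IsStarConstellation G α)
    (hv : 1 < ndeg G v) : ndeg G v ≤ 2 * (leafNeighbors G v).ncard := by
  have := hG.2 v hv
  have := ndeg_le_card_leafNeighbors_add (G := G) v
  unfold leafNeighbors at *
  omega

lemma IsStarConstellation.half_le_utility (hG : IsStarConstellation G α) (hv : 1 < ndeg G v)
    (h : ∀ w ∈ leafNeighbors G v, τ w = τ v) : 1 / 2 ≤ utility G τ v := by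
  have : (leafNeighbors G v).ncard ≤ (sameTypeNeighbors G τ v).ncard :=
    Set.ncard_le_ncard fun w hw => ⟨hw.1, h w hw⟩
  have := hG.ndeg_le_two_mul_card_leafNeighbors hv
  exact half_le_utility_of_le (by omega) (by omega)

lemma IsStarConstellation.utility_le_half (hG : IsStarConstellation G α) (hv : 1 < ndeg G v)
    (h : ∀ w ∈ leafNeighbors G v, τ w ≠ τ v) : utility G τ v ≤ 1 / 2 := by
  have : (sameTypeNeighbors G τ v).ncard ≤ (G.neighborSet v \ leafNeighbors G v).ncard :=
    Set.ncard_le_ncard fun w ⟨hw, hτ⟩ => ⟨hw, fun hl => h w hl hτ⟩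
  have : (G.neighborSet v \ leafNeighbors G v).ncard + (leafNeighbors G v).ncard = ndeg G v :=
    Set.ncard_sdiff_add_ncard_of_subset (Set.sep_subset _ _)
  have := hG.ndeg_le_two_mul_card_leafNeighbors hv
  exact utility_le_half_of_le (by omega)

lemma IsStarConstellation.half_le_utility_of_leaves_match (hG : IsStarConstellation G α)
    (hleaf : ∀ v : V, ndeg G v = 1 → ∀ w : V, G.Adj v w → τ w = τ v) (hv : 1 < ndeg G v) : 1 / 2 ≤ utility G τ v :=
  hG.half_le_utility hv fun w ⟨hw, hw1⟩ => (hleaf w hw1 v (G.adj_symm hw)).symm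

lemma IsStarConstellation.utility_swapAt_le_half (hG : IsStarConstellation G α)
    (hleaf : ∀ v : V, ndeg G v = 1 → ∀ w : V, G.Adj v w → τ w = τ v) {i j : V}
    (hi : 1 < ndeg G i) (hj : 1 < ndeg G j) (hij : τ i ≠ τ j) :
    utility G (swapAt τ i j) j ≤ 1 / 2 := by
  have hne : i ≠ j := fun h => hij (congrArg τ h)
  refine hG.utility_le_half hj fun w ⟨hw, hw1⟩ => ?_
  have hwi : w ≠ i := by rintro rfl; omega
  have hwj : w ≠ j := by rintro rfl; exact G.irrefl hw
  rw [swapAt_of_ne τ hwi hwj, swapAt_right τ hne, ← hleaf w hw1 j (G.adj_symm hw)]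
  exact hij.symm

end

/-- On an `α`-star-constellation graph, any assignment in which every degree-one vertex is
occupied by an agent of the same type as the agent on its unique neighbor is a
swap-equilibrium. -/
theorem starConstellation_swapEq_of_leaves_match [Fintype V] (G : SimpleGraph V) (α : ℕ)
    (τ : V → Bool) (hG : IsStarConstellation G α)
    (hleaf : ∀ v : V, ndeg G v = 1 → ∀ w : V, G.Adj v w → τ w = τ v) :
    IsSwapEq G τ := by
  rintro i j ⟨hij, hgain_i, hgain_j⟩
  rcases lt_trichotomy (ndeg G i) 1 with hi | hi | hi
  · rw [utility_of_ndeg_eq_zero (swapAt τ i j) (by omega : ndeg G i = 0)] at hgain_j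
    linarith [utility_nonneg G τ j]
  · rw [utility_of_ndeg_eq_one hi (hleaf i hi)] at hgain_i
    linarith [utility_le_one G (swapAt τ i j) j]
  rcases lt_trichotomy (ndeg G j) 1 with hj | hj | hj
  · rw [utility_of_ndeg_eq_zero (swapAt τ i j) (by omega : ndeg G j = 0)] at hgain_i
    linarith [utility_nonneg G τ i]
  · rw [utility_of_ndeg_eq_one hj (hleaf j hj)] at hgain_j
    linarith [utility_le_one G (swapAt τ i j) i]
  linarith [hG.half_le_utility_of_leaves_match hleaf hi, hG.utility_swapAt_le_half hleaf hi hj hij]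
end
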